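/- There exists an anti-sign symmetric 2×2 real matrix A such that (D·A)² is a Q-matrix for every positive diagonal matrix D, yet A² is not a P₀⁺-matrix. -/
import Mathlib


open Matrix

def IsQ (M : Matrix (Fin 2) (Fin 2) ℝ) : Prop :=
  0 < M.trace ∧ 0 < M.det

/-- A 2×2 real matrix is a P₀⁺-matrix: principal minors nonnegative with at
least one positive of each order. -/
def IsP0plus (M : Matrix (Fin 2) (Fin 2) ℝ) : Prop :=
  0 ≤ M 0 0 ∧ 0 ≤ M 1 1 ∧ 0 ≤ M.det ∧ (0 < M 0 0 ∨ 0 < M 1 1) ∧ 0 < M.det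

theorem exists_antiSignSymm_counterexample :
    ∃ A : Matrix (Fin 2) (Fin 2) ℝ,
      A 0 1 * A 1 0 ≤ 0 ∧
      (∀ D : Matrix (Fin 2) (Fin 2) ℝ, D.IsDiag → (∀ i, 0 < D i i) →
        IsQ ((D * A) * (D * A))) ∧
      ¬ IsP0plus (A * A) := by
  refine ⟨!![1, 2; -1, 5], by norm_num, ?_, ?_⟩
  · intro D hD hpos
    have h01 : D 0 1 = 0 := hD (by decide)
    have h10 : D 1 0 = 0 := hD (by decide)
    have hd := hpos 0
    have he := hpos 1
    constructor
    · simp only [Matrix.trace, Matrix.diag, Matrix.mul_apply, Fin.sum_univ_two,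
        Matrix.cons_val', Matrix.cons_val_zero, Matrix.cons_val_one, Matrix.head_cons,
        Matrix.head_fin_const, Matrix.empty_val', Matrix.cons_val_fin_one] at *
      norm_num
      nlinarith [sq_nonneg (D 0 0 - 2 * D 1 1), sq_nonneg (D 1 1)]
    · rw [Matrix.det_mul, Matrix.det_mul]
      have hA : (!![(1:ℝ), 2; -1, 5]).det = 7 := by
        rw [Matrix.det_fin_two]; norm_num
      have hDdet : D.det = D 0 0 * D 1 1 := by
        rw [Matrix.det_fin_two, h01, h10]; ring
      rw [hA, hDdet]
      positivity
  · intro h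
    have h1 := h.1
    norm_num [Matrix.mul_apply, Fin.sum_univ_two] at h1
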